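/- If two systems with inputs u₁, u₂ and outputs y₁, y₂ are each output strictly passive with constants α₁, α₂ > 0 (∫₀ᵀ uᵢᵀyᵢ dt ≥ αᵢ∫₀ᵀ ‖yᵢ‖² dt), then, with α = min(α₁,α₂), their negative feedback interconnection u₁ = r − y₂, u₂ = y₁ satisfies ∫₀ᵀ(‖y₁‖²+‖y₂‖²)dt ≤ (1/α²)∫₀ᵀ‖r‖²dt. -/

import Mathlib

/-- Negative feedback interconnection of two output strictly passive systems
(`u₁ = r − y₂`, `u₂ = y₁`) is finite-gain `L₂` stable:
`∫₀ᵀ (‖y₁‖² + ‖y₂‖²) ≤ (1/α²) ∫₀ᵀ ‖r‖²` with `α = min α₁ α₂`. -/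
theorem feedback_interconnection_L2_stable {n : ℕ}
    (T α₁ α₂ : ℝ) (hT : 0 ≤ T) (hα₁ : 0 < α₁) (hα₂ : 0 < α₂)
    (r y₁ y₂ : ℝ → EuclideanSpace ℝ (Fin n))
    (hi1 : IntervalIntegrable (fun t => ‖y₁ t‖ ^ 2) MeasureTheory.volume 0 T)
    (hi2 : IntervalIntegrable (fun t => ‖y₂ t‖ ^ 2) MeasureTheory.volume 0 T)
    (hir : IntervalIntegrable (fun t => ‖r t‖ ^ 2) MeasureTheory.volume 0 T)
    (hiry : IntervalIntegrable (fun t => (inner ℝ (r t) (y₁ t) : ℝ)) MeasureTheory.volume 0 T)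
    (hpass1 : α₁ * ∫ t in (0:ℝ)..T, ‖y₁ t‖ ^ 2 ≤
      ∫ t in (0:ℝ)..T, (inner ℝ (r t - y₂ t) (y₁ t) : ℝ))
    (hpass2 : α₂ * ∫ t in (0:ℝ)..T, ‖y₂ t‖ ^ 2 ≤
      ∫ t in (0:ℝ)..T, (inner ℝ (y₁ t) (y₂ t) : ℝ)) :
    ∫ t in (0:ℝ)..T, (‖y₁ t‖ ^ 2 + ‖y₂ t‖ ^ 2) ≤
      (1 / (min α₁ α₂) ^ 2) * ∫ t in (0:ℝ)..T, ‖r t‖ ^ 2 := by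
  set α := min α₁ α₂ with hαdef
  have hα : 0 < α := lt_min hα₁ hα₂
  set I₁ := ∫ t in (0:ℝ)..T, ‖y₁ t‖ ^ 2 with hI1
  set I₂ := ∫ t in (0:ℝ)..T, ‖y₂ t‖ ^ 2 with hI2
  set R := ∫ t in (0:ℝ)..T, ‖r t‖ ^ 2 with hRdef
  have hI1nn : 0 ≤ I₁ :=
    intervalIntegral.integral_nonneg hT (fun t _ => by positivity)
  have hI2nn : 0 ≤ I₂ :=
    intervalIntegral.integral_nonneg hT (fun t _ => by positivity)
  have hRnn : 0 ≤ R :=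
    intervalIntegral.integral_nonneg hT (fun t _ => by positivity)
  have hsum : ∫ t in (0:ℝ)..T, (‖y₁ t‖ ^ 2 + ‖y₂ t‖ ^ 2) = I₁ + I₂ :=
    intervalIntegral.integral_add hi1 hi2
  rw [hsum]
  have hfg : ∀ t, (inner ℝ (r t) (y₁ t) : ℝ) - (inner ℝ (r t - y₂ t) (y₁ t) : ℝ)
      = (inner ℝ (y₁ t) (y₂ t) : ℝ) := by
    intro t
    rw [inner_sub_left, real_inner_comm (y₂ t) (y₁ t)]
    ring
  by_cases hf : IntervalIntegrable
      (fun t => (inner ℝ (r t - y₂ t) (y₁ t) : ℝ)) MeasureTheory.volume 0 T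
  · have hg : IntervalIntegrable
        (fun t => (inner ℝ (y₁ t) (y₂ t) : ℝ)) MeasureTheory.volume 0 T := by
      have h := hiry.sub hf
      have heq : (fun t => (inner ℝ (r t) (y₁ t) : ℝ) - (inner ℝ (r t - y₂ t) (y₁ t) : ℝ))
          = fun t => (inner ℝ (y₁ t) (y₂ t) : ℝ) := funext hfg
      rwa [heq] at h
    have hadd : (∫ t in (0:ℝ)..T, (inner ℝ (r t - y₂ t) (y₁ t) : ℝ))
        + (∫ t in (0:ℝ)..T, (inner ℝ (y₁ t) (y₂ t) : ℝ))
        = ∫ t in (0:ℝ)..T, (inner ℝ (r t) (y₁ t) : ℝ) := by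
      rw [← intervalIntegral.integral_add hf hg]
      congr 1
      funext t
      have := hfg t
      linarith
    have hmin1 : α * I₁ ≤ α₁ * I₁ :=
      mul_le_mul_of_nonneg_right (min_le_left _ _) hI1nn
    have hmin2 : α * I₂ ≤ α₂ * I₂ :=
      mul_le_mul_of_nonneg_right (min_le_right _ _) hI2nn
    have hkey : α * (I₁ + I₂) ≤ ∫ t in (0:ℝ)..T, (inner ℝ (r t) (y₁ t) : ℝ) := by
      nlinarith [hpass1, hpass2]
    have hyoung : (∫ t in (0:ℝ)..T, (inner ℝ (r t) (y₁ t) : ℝ))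
        ≤ (1 / (2 * α)) * R + (α / 2) * I₁ := by
      have hmono : (∫ t in (0:ℝ)..T, (inner ℝ (r t) (y₁ t) : ℝ))
          ≤ ∫ t in (0:ℝ)..T, ((1 / (2 * α)) * ‖r t‖ ^ 2 + (α / 2) * ‖y₁ t‖ ^ 2) := by
        apply intervalIntegral.integral_mono_on hT hiry
          ((hir.const_mul _).add (hi1.const_mul _))
        intro t _
        have h1 : (inner ℝ (r t) (y₁ t) : ℝ) ≤ ‖r t‖ * ‖y₁ t‖ :=
          real_inner_le_norm _ _
        have h2 : 2 * α * (‖r t‖ * ‖y₁ t‖) ≤ ‖r t‖ ^ 2 + α ^ 2 * ‖y₁ t‖ ^ 2 := by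
          nlinarith [sq_nonneg (‖r t‖ - α * ‖y₁ t‖)]
        have h3 : ‖r t‖ * ‖y₁ t‖ ≤ 1 / (2 * α) * ‖r t‖ ^ 2 + α / 2 * ‖y₁ t‖ ^ 2 := by
          rw [show 1 / (2 * α) * ‖r t‖ ^ 2 + α / 2 * ‖y₁ t‖ ^ 2
              = (‖r t‖ ^ 2 + α ^ 2 * ‖y₁ t‖ ^ 2) / (2 * α) by field_simp,
            le_div_iff₀ (by positivity)]
          linarith
        linarith
      rw [intervalIntegral.integral_add (hir.const_mul _) (hi1.const_mul _),
        intervalIntegral.integral_const_mul, intervalIntegral.integral_const_mul] at hmono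
      exact hmono
    have h3 : (α / 2) * (I₁ + I₂) ≤ 1 / (2 * α) * R := by
      nlinarith [mul_nonneg hα.le hI2nn]
    have h4 := mul_le_mul_of_nonneg_left h3 (by positivity : (0:ℝ) ≤ 2 * α)
    have hfin : α ^ 2 * (I₁ + I₂) ≤ R := by
      calc α ^ 2 * (I₁ + I₂) = 2 * α * ((α / 2) * (I₁ + I₂)) := by ring
        _ ≤ 2 * α * (1 / (2 * α) * R) := h4
        _ = R := by field_simp
    rw [one_div, inv_mul_eq_div, le_div_iff₀ (by positivity)]
    linarith
  · have h1 : (∫ t in (0:ℝ)..T, (inner ℝ (r t - y₂ t) (y₁ t) : ℝ)) = 0 :=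
      intervalIntegral.integral_undef hf
    have hg : ¬ IntervalIntegrable
        (fun t => (inner ℝ (y₁ t) (y₂ t) : ℝ)) MeasureTheory.volume 0 T := by
      intro hg
      apply hf
      have := hiry.sub hg
      have heq : (fun t => (inner ℝ (r t) (y₁ t) : ℝ) - (inner ℝ (y₁ t) (y₂ t) : ℝ))
          = fun t => (inner ℝ (r t - y₂ t) (y₁ t) : ℝ) := by
        funext t
        have := hfg t
        linarith
      rwa [heq] at this
    have h2 : (∫ t in (0:ℝ)..T, (inner ℝ (y₁ t) (y₂ t) : ℝ)) = 0 :=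
      intervalIntegral.integral_undef hg
    rw [h1] at hpass1
    rw [h2] at hpass2
    have hz1 : I₁ ≤ 0 := le_of_mul_le_mul_left (by linarith : α₁ * I₁ ≤ α₁ * 0) hα₁
    have hz2 : I₂ ≤ 0 := le_of_mul_le_mul_left (by linarith : α₂ * I₂ ≤ α₂ * 0) hα₂
    have : I₁ + I₂ ≤ 0 := by linarith
    have hrhs : 0 ≤ (1 / α ^ 2) * R := by positivity
    linarith
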